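/- arXiv:1906.09585 — 3 statements merged into one kernel-verified Lean document; each statement's English description precedes it below -/
import Mathlib

section
/- Let G be a nilpotent group with γ_{c+1}(G) = 1, let a ∈ γ_i(G) and b ∈ γ_j(G) with i + 3j ≥ c + 1, and let n be a positive integer such that b^n lies in the center of G. If n is odd then [b,a]^n = 1, and if n is even then [b,a]^{2n} = 1. -/
open scoped commutatorElement

private theorem three_subgroups_le {G : Type*} [Group G] {A B C N : Subgroup G} [N.Normal]
    (h1 : ⁅⁅B, C⁆, A⁆ ≤ N) (h2 : ⁅⁅C, A⁆, B⁆ ≤ N) : ⁅⁅A, B⁆, C⁆ ≤ N := by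
  let f := QuotientGroup.mk' N
  have key := Subgroup.commutator_commutator_eq_bot_of_rotate
    (H₁ := A.map f) (H₂ := B.map f) (H₃ := C.map f)
    (by rw [← Subgroup.map_commutator, ← Subgroup.map_commutator,
          Subgroup.map_eq_bot_iff, QuotientGroup.ker_mk']; exact h1)
    (by rw [← Subgroup.map_commutator, ← Subgroup.map_commutator,
          Subgroup.map_eq_bot_iff, QuotientGroup.ker_mk']; exact h2)
  rw [← Subgroup.map_commutator, ← Subgroup.map_commutator,
      Subgroup.map_eq_bot_iff, QuotientGroup.ker_mk'] at key
  exact key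

private theorem lcs_commutator_le {G : Type*} [Group G] :
    ∀ (n m : ℕ), ⁅(⊤ : Subgroup G).lowerCentralSeries m, (⊤ : Subgroup G).lowerCentralSeries n⁆ ≤
      (⊤ : Subgroup G).lowerCentralSeries (m + n + 1)
  | 0, m => by
      rw [Subgroup.lowerCentralSeries_zero]
      exact le_of_eq rfl
  | n + 1, m => by
      have hmain : ⁅⁅(⊤ : Subgroup G).lowerCentralSeries n, (⊤ : Subgroup G)⁆, (⊤ : Subgroup G).lowerCentralSeries m⁆ ≤
          (⊤ : Subgroup G).lowerCentralSeries (m + (n + 1) + 1) := by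
        apply three_subgroups_le
        · -- ⁅⁅⊤, γ m⁆, γ n⁆ ≤ _
          have : ⁅(⊤ : Subgroup G), (⊤ : Subgroup G).lowerCentralSeries m⁆ = (⊤ : Subgroup G).lowerCentralSeries (m + 1) := by
            rw [Subgroup.commutator_comm]; rfl
          rw [this]
          have := lcs_commutator_le (G := G) n (m + 1)
          simpa [Nat.add_assoc, Nat.add_comm, Nat.add_left_comm] using this
        · -- ⁅⁅γ m, γ n⁆, ⊤⁆ ≤ _
          calc ⁅⁅(⊤ : Subgroup G).lowerCentralSeries m, (⊤ : Subgroup G).lowerCentralSeries n⁆, (⊤ : Subgroup G)⁆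
              ≤ ⁅(⊤ : Subgroup G).lowerCentralSeries (m + n + 1), (⊤ : Subgroup G)⁆ :=
                Subgroup.commutator_mono (lcs_commutator_le n m) le_rfl
            _ = (⊤ : Subgroup G).lowerCentralSeries (m + n + 2) := rfl
            _ = (⊤ : Subgroup G).lowerCentralSeries (m + (n + 1) + 1) := rfl
      calc ⁅(⊤ : Subgroup G).lowerCentralSeries m, (⊤ : Subgroup G).lowerCentralSeries (n + 1)⁆
          = ⁅⁅(⊤ : Subgroup G).lowerCentralSeries n, (⊤ : Subgroup G)⁆, (⊤ : Subgroup G).lowerCentralSeries m⁆ := by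
            rw [Subgroup.commutator_comm]; rfl
        _ ≤ _ := hmain

private theorem two_mul_choose_two : ∀ n : ℕ, 2 * n.choose 2 = n * (n - 1)
  | 0 => rfl
  | n + 1 => by
      rw [Nat.choose_succ_succ, Nat.choose_one_right, Nat.mul_add, two_mul_choose_two n]
      cases n with
      | zero => rfl
      | succ m => simp only [Nat.add_sub_cancel]; ring

/-- Let `G` be a nilpotent group with `γ_{c+1}(G) = 1`, let `a ∈ γ_i(G)` and
`b ∈ γ_j(G)` with `i + 3j ≥ c + 1`, and let `n` be a positive integer with
`b ^ n` central.  If `n` is odd then `⁅b, a⁆ ^ n = 1`, and if `n` is even then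
`⁅b, a⁆ ^ (2n) = 1`.  Here `γ_i(G) = lowerCentralSeries G (i - 1)`. -/
theorem commutator_pow_eq_one_of_pow_left_mem_center
    {G : Type*} [Group G] {c : ℕ} (hG : (⊤ : Subgroup G).lowerCentralSeries c = ⊥)
    {i j : ℕ} (hi : 1 ≤ i) (hj : 1 ≤ j) (hij : c + 1 ≤ i + 3 * j)
    {a b : G} (ha : a ∈ (⊤ : Subgroup G).lowerCentralSeries (i - 1))
    (hb : b ∈ (⊤ : Subgroup G).lowerCentralSeries (j - 1))
    {n : ℕ} (hn : 0 < n) (hbn : b ^ n ∈ Subgroup.center G) :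
    (Odd n → ⁅b, a⁆ ^ n = 1) ∧ (Even n → ⁅b, a⁆ ^ (2 * n) = 1) := by
  set x : G := ⁅b, a⁆ with hxdef
  set z : G := ⁅b, x⁆ with hzdef
  have hbot : ∀ k, c ≤ k → (⊤ : Subgroup G).lowerCentralSeries k = ⊥ := fun k hk =>
    le_bot_iff.mp (hG ▸ Subgroup.lowerCentralSeries_antitone _ hk)
  have hx : x ∈ (⊤ : Subgroup G).lowerCentralSeries (i + j - 1) := by
    have := lcs_commutator_le (i - 1) (j - 1) (Subgroup.commutator_mem_commutator hb ha)
    have he : (j - 1) + (i - 1) + 1 = i + j - 1 := by omega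
    rwa [he] at this
  have hz : z ∈ (⊤ : Subgroup G).lowerCentralSeries (i + 2 * j - 1) := by
    have := lcs_commutator_le (i + j - 1) (j - 1) (Subgroup.commutator_mem_commutator hb hx)
    have he : (j - 1) + (i + j - 1) + 1 = i + 2 * j - 1 := by omega
    rwa [he] at this
  have hbz : ⁅b, z⁆ = 1 := by
    have := lcs_commutator_le (i + 2 * j - 1) (j - 1) (Subgroup.commutator_mem_commutator hb hz)
    rw [hbot ((j - 1) + (i + 2 * j - 1) + 1) (by omega)] at this
    simpa using this
  have hxz : ⁅x, z⁆ = 1 := by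
    have := lcs_commutator_le (i + 2 * j - 1) (i + j - 1) (Subgroup.commutator_mem_commutator hx hz)
    rw [hbot ((i + j - 1) + (i + 2 * j - 1) + 1) (by omega)] at this
    simpa using this
  have hcbz : Commute b z := commutatorElement_eq_one_iff_commute.mp hbz
  have hcxz : Commute z x := (commutatorElement_eq_one_iff_commute.mp hxz).symm
  have hbx : b * x * b⁻¹ = z * x := by rw [hzdef, commutatorElement_def]; group
  have hba : b * a * b⁻¹ = x * a := by rw [hxdef, commutatorElement_def]; group
  -- conjugation of powers of x by b
  have hconjx : ∀ k : ℕ, b * x ^ k * b⁻¹ = z ^ k * x ^ k := by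
    intro k
    have hmap := map_pow (MulAut.conj b) x k
    simp only [MulAut.conj_apply] at hmap
    calc b * x ^ k * b⁻¹ = (b * x * b⁻¹) ^ k := hmap
      _ = (z * x) ^ k := by rw [hbx]
      _ = z ^ k * x ^ k := hcxz.mul_pow k
  have key : ∀ k : ℕ, b ^ k * a * (b ^ k)⁻¹ = z ^ (k.choose 2) * x ^ k * a := by
    intro k
    induction k with
    | zero => simp
    | succ k ih =>
      have hT : (k + 1).choose 2 = k.choose 2 + k := by
        rw [Nat.choose_succ_succ, Nat.choose_one_right]; exact Nat.add_comm k _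
      have step : b ^ (k + 1) * a * (b ^ (k + 1))⁻¹
          = b * (b ^ k * a * (b ^ k)⁻¹) * b⁻¹ := by
        rw [pow_succ']; group
      rw [step, ih]
      calc b * (z ^ k.choose 2 * x ^ k * a) * b⁻¹
          = (b * z ^ k.choose 2 * b⁻¹) * (b * x ^ k * b⁻¹) * (b * a * b⁻¹) := by group
        _ = z ^ k.choose 2 * (z ^ k * x ^ k) * (x * a) := by
            rw [hconjx, hba, (hcbz.pow_right _).eq]; group
        _ = z ^ (k + 1).choose 2 * x ^ (k + 1) * a := by
            rw [hT, pow_add, pow_succ]; group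
  have hcent : b ^ n * a * (b ^ n)⁻¹ = a := by
    rw [← Subgroup.mem_center_iff.mp hbn a]; group
  have hmain : z ^ (n.choose 2) * x ^ n = 1 := by
    have := (key n).symm.trans hcent
    calc z ^ n.choose 2 * x ^ n = z ^ n.choose 2 * x ^ n * a * a⁻¹ := by group
      _ = a * a⁻¹ := by rw [this]
      _ = 1 := by group
  have hxn : x ^ n = (z ^ n.choose 2)⁻¹ :=
    (inv_eq_of_mul_eq_one_right hmain).symm
  have hzn : z ^ n = 1 := by
    have hc2 : Commute b (z ^ n.choose 2)⁻¹ := (hcbz.pow_right _).inv_right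
    have h1 : b * x ^ n * b⁻¹ = x ^ n := by
      rw [hxn, hc2.eq]; group
    have h2 := hconjx n
    rw [h1, hxn] at h2
    have h3 : z ^ n * (z ^ n.choose 2)⁻¹ = 1 * (z ^ n.choose 2)⁻¹ := by
      rw [← h2, one_mul]
    exact mul_right_cancel h3
  constructor
  · rintro ⟨m, hm⟩
    have hch : n.choose 2 = n * m := by
      have h2 := two_mul_choose_two n
      have hnm : n - 1 = 2 * m := by omega
      have h3 : n * (2 * m) = 2 * (n * m) := by ring
      rw [hnm, h3] at h2
      omega
    rw [hxn, hch, pow_mul, hzn, one_pow, inv_one]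
  · intro _
    have hsq : (z ^ n.choose 2) ^ 2 = 1 := by
      calc (z ^ n.choose 2) ^ 2 = z ^ (n.choose 2 * 2) := (pow_mul z _ 2).symm
        _ = z ^ (n * (n - 1)) := by rw [Nat.mul_comm, two_mul_choose_two]
        _ = (z ^ n) ^ (n - 1) := pow_mul z n (n - 1)
        _ = 1 := by rw [hzn, one_pow]
    rw [mul_comm 2 n, pow_mul, hxn, inv_pow, hsq, inv_one]
end

section
/- Let G be a nilpotent group with γ_{c+1}(G) = 1, let a ∈ γ_i(G) and b ∈ γ_j(G) with 3i + j ≥ c + 1, and let n be a positive integer such that a^n lies in the center of G. If n is odd then [b,a]^n = 1, and if n is even then [b,a]^{2n} = 1. -/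
open scoped commutatorElement

/-- Three subgroups lemma with a normal subgroup as target. -/
theorem aux_three_subgroups {G : Type*} [Group G] {H₁ H₂ H₃ N : Subgroup G} [N.Normal]
    (h1 : ⁅⁅H₂, H₃⁆, H₁⁆ ≤ N) (h2 : ⁅⁅H₃, H₁⁆, H₂⁆ ≤ N) : ⁅⁅H₁, H₂⁆, H₃⁆ ≤ N := by
  have key : ∀ {A B C : Subgroup G}, ⁅⁅A, B⁆, C⁆ ≤ N ↔
      ⁅⁅A.map (QuotientGroup.mk' N), B.map (QuotientGroup.mk' N)⁆,
        C.map (QuotientGroup.mk' N)⁆ = ⊥ := by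
    intro A B C
    rw [← Subgroup.map_commutator, ← Subgroup.map_commutator, Subgroup.map_eq_bot_iff,
      QuotientGroup.ker_mk']
  rw [key]
  exact Subgroup.commutator_commutator_eq_bot_of_rotate (key.mp h1) (key.mp h2)

theorem aux_lcs_commutator_le (G : Type*) [Group G] : ∀ (k m : ℕ),
    ⁅(⊤ : Subgroup G).lowerCentralSeries m, (⊤ : Subgroup G).lowerCentralSeries k⁆ ≤ (⊤ : Subgroup G).lowerCentralSeries (m + k + 1)
  | 0, m => by
    rw [Subgroup.lowerCentralSeries_zero]
    exact le_of_eq rfl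
  | k + 1, m => by
    rw [Subgroup.lowerCentralSeries_succ, Subgroup.commutator_comm]
    apply aux_three_subgroups
    · calc ⁅⁅(⊤ : Subgroup G), (⊤ : Subgroup G).lowerCentralSeries m⁆, (⊤ : Subgroup G).lowerCentralSeries k⁆
          ≤ ⁅(⊤ : Subgroup G).lowerCentralSeries (m + 1), (⊤ : Subgroup G).lowerCentralSeries k⁆ :=
            Subgroup.commutator_mono
              (le_of_eq (Subgroup.commutator_comm _ _)) le_rfl
        _ ≤ (⊤ : Subgroup G).lowerCentralSeries (m + 1 + k + 1) := aux_lcs_commutator_le G k (m + 1)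
        _ ≤ (⊤ : Subgroup G).lowerCentralSeries (m + (k + 1) + 1) := le_of_eq (by ring_nf)
    · calc ⁅⁅(⊤ : Subgroup G).lowerCentralSeries m, (⊤ : Subgroup G).lowerCentralSeries k⁆, (⊤ : Subgroup G)⁆
          ≤ ⁅(⊤ : Subgroup G).lowerCentralSeries (m + k + 1), (⊤ : Subgroup G)⁆ :=
            Subgroup.commutator_mono (aux_lcs_commutator_le G k m) le_rfl
        _ = (⊤ : Subgroup G).lowerCentralSeries (m + k + 1 + 1) := rfl
        _ ≤ (⊤ : Subgroup G).lowerCentralSeries (m + (k + 1) + 1) := le_of_eq (by ring_nf)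

/-- Let `G` be a nilpotent group with `γ_{c+1}(G) = 1`, let `a ∈ γ_i(G)` and
`b ∈ γ_j(G)` with `3i + j ≥ c + 1`, and let `n` be a positive integer with
`a ^ n` central.  If `n` is odd then `⁅b, a⁆ ^ n = 1`, and if `n` is even then
`⁅b, a⁆ ^ (2n) = 1`.  Here `γ_i(G) = (⊤ : Subgroup G).lowerCentralSeries (i - 1)`. -/
theorem commutator_pow_eq_one_of_pow_right_mem_center
    {G : Type*} [Group G] {c : ℕ} (hG : (⊤ : Subgroup G).lowerCentralSeries c = ⊥)
    {i j : ℕ} (hi : 1 ≤ i) (hj : 1 ≤ j) (hij : c + 1 ≤ 3 * i + j)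
    {a b : G} (ha : a ∈ (⊤ : Subgroup G).lowerCentralSeries (i - 1))
    (hb : b ∈ (⊤ : Subgroup G).lowerCentralSeries (j - 1))
    {n : ℕ} (hn : 0 < n) (han : a ^ n ∈ Subgroup.center G) :
    (Odd n → ⁅b, a⁆ ^ n = 1) ∧ (Even n → ⁅b, a⁆ ^ (2 * n) = 1) := by
  set x := ⁅b, a⁆ with hxdef
  set y := ⁅x, a⁆ with hydef
  -- membership facts
  have hxm : x ∈ (⊤ : Subgroup G).lowerCentralSeries ((j - 1) + (i - 1) + 1) :=
    aux_lcs_commutator_le G (i - 1) (j - 1) (Subgroup.commutator_mem_commutator hb ha)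
  have hym : y ∈ (⊤ : Subgroup G).lowerCentralSeries ((j - 1) + (i - 1) + 1 + (i - 1) + 1) :=
    aux_lcs_commutator_le G (i - 1) _ (Subgroup.commutator_mem_commutator hxm ha)
  have hbot : ∀ {k : ℕ}, c ≤ k → (⊤ : Subgroup G).lowerCentralSeries k ≤ ⊥ := fun {k} hk =>
    hG ▸ (⊤ : Subgroup G).lowerCentralSeries_antitone hk
  have hya : ⁅y, a⁆ = 1 := by
    have : ⁅y, a⁆ ∈ (⊤ : Subgroup G).lowerCentralSeries ((j-1)+(i-1)+1+(i-1)+1+(i-1)+1) :=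
      aux_lcs_commutator_le G (i - 1) _ (Subgroup.commutator_mem_commutator hym ha)
    have := hbot (by omega) this
    simpa using this
  have hyx : ⁅y, x⁆ = 1 := by
    have : ⁅y, x⁆ ∈ (⊤ : Subgroup G).lowerCentralSeries
        ((j-1)+(i-1)+1+(i-1)+1 + ((j-1)+(i-1)+1) + 1) :=
      aux_lcs_commutator_le G _ _ (Subgroup.commutator_mem_commutator hym hxm)
    have := hbot (by omega) this
    simpa using this
  have cya : Commute y a := commutatorElement_eq_one_iff_commute.mp hya
  have cyx : Commute y x := commutatorElement_eq_one_iff_commute.mp hyx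
  have hcen : ∀ g : G, g * a ^ n = a ^ n * g := fun g =>
    (Subgroup.mem_center_iff.mp han g)
  -- (x*a)^n = a^n
  have hxa : x * a = b * a * b⁻¹ := by
    rw [hxdef, commutatorElement_def]; group
  have h1 : (x * a) ^ n = a ^ n := by
    rw [hxa, conj_pow, hcen b]; group
  -- y^n = 1
  have hconj : x * a * x⁻¹ = y * a := by
    rw [hydef, commutatorElement_def]; group
  have h2 : y ^ n = 1 := by
    have e1 : x * a ^ n * x⁻¹ = a ^ n := by rw [hcen x]; group
    have e2 : x * a ^ n * x⁻¹ = (x * a * x⁻¹) ^ n := by rw [conj_pow]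
    have e3 : (y * a) ^ n = y ^ n * a ^ n := cya.mul_pow n
    have : y ^ n * a ^ n = a ^ n := by rw [← e3, ← hconj, ← e2, e1]
    calc y ^ n = y ^ n * a ^ n * (a ^ n)⁻¹ := by group
      _ = a ^ n * (a ^ n)⁻¹ := by rw [this]
      _ = 1 := by group
  -- key commutation: x * (x*a)^k = y^k * (x*a)^k * x
  have hmove : x * (x * a) = y * (x * a) * x := by
    have : y * a * x = x * a := by rw [hydef, commutatorElement_def]; group
    calc x * (x * a) = x * (y * a * x) := by rw [this]
      _ = y * (x * a) * x := by
          rw [show x * (y * a * x) = (x * y) * a * x by group, ← cyx.eq]; group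
  have cyxa : Commute y (x * a) := cyx.mul_right cya
  have key1 : ∀ k : ℕ, x * (x * a) ^ k = y ^ k * (x * a) ^ k * x := by
    intro k
    induction k with
    | zero => group
    | succ k ih =>
      calc x * (x * a) ^ (k + 1) = (x * (x * a) ^ k) * (x * a) := by
            rw [pow_succ]; group
        _ = y ^ k * (x * a) ^ k * (x * (x * a)) := by rw [ih]; group
        _ = y ^ k * (x * a) ^ k * (y * (x * a) * x) := by rw [hmove]
        _ = y ^ k * ((x * a) ^ k * y) * (x * a) * x := by group
        _ = y ^ k * (y * (x * a) ^ k) * (x * a) * x := by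
            rw [((cyxa.pow_right k).symm).eq]
        _ = y ^ (k + 1) * (x * a) ^ (k + 1) * x := by rw [pow_succ, pow_succ]; group
  -- main formula: x^k * a^k = y^(k.choose 2) * (x*a)^k
  have key2 : ∀ k : ℕ, x ^ k * a ^ k = y ^ (k.choose 2) * (x * a) ^ k := by
    intro k
    induction k with
    | zero => simp
    | succ k ih =>
      have hch : (k + 1).choose 2 = k.choose 2 + k := by
        rw [Nat.choose_succ_succ, Nat.choose_one_right, Nat.add_comm]
      calc x ^ (k + 1) * a ^ (k + 1) = x * (x ^ k * a ^ k) * a := by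
            rw [pow_succ, pow_succ']; group
        _ = x * (y ^ (k.choose 2) * (x * a) ^ k) * a := by rw [ih]
        _ = y ^ (k.choose 2) * (x * (x * a) ^ k) * a := by
            rw [show x * (y ^ (k.choose 2) * (x * a) ^ k) * a
                = (x * y ^ (k.choose 2)) * (x * a) ^ k * a by group,
              ((cyx.pow_left (k.choose 2)).symm).eq]
            group
        _ = y ^ (k.choose 2) * (y ^ k * (x * a) ^ k * x) * a := by rw [key1 k]
        _ = y ^ ((k + 1).choose 2) * (x * a) ^ (k + 1) := by
            rw [hch, pow_add, pow_succ]; group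
  -- conclusion: x^n = y^(n.choose 2)
  have hxn : x ^ n = y ^ (n.choose 2) := by
    have := key2 n
    rw [h1] at this
    calc x ^ n = x ^ n * a ^ n * (a ^ n)⁻¹ := by group
      _ = y ^ (n.choose 2) * a ^ n * (a ^ n)⁻¹ := by rw [this]
      _ = y ^ (n.choose 2) := by group
  constructor
  · rintro ⟨m, hm⟩
    have hch : n.choose 2 = n * m := by
      rw [Nat.choose_two_right, show n - 1 = 2 * m by omega,
        Nat.mul_div_assoc n ⟨m, rfl⟩]
      simp [Nat.mul_div_cancel_left]
    rw [hxn, hch, pow_mul, h2, one_pow]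
  · rintro ⟨m, hm⟩
    have hdvd : 2 ∣ n * (n - 1) := Dvd.dvd.mul_right ⟨m, by omega⟩ _
    have hch : 2 * n.choose 2 = n * (n - 1) := by
      rw [Nat.choose_two_right, Nat.mul_div_cancel' hdvd]
    rw [mul_comm 2 n, pow_mul, hxn, ← pow_mul, mul_comm (n.choose 2) 2, hch,
      pow_mul, h2, one_pow]
end

section
/- Let p be a prime and let G be a finite p-group of nilpotency class at most p. Then the exponent of the commutator subgroup γ₂(G) = [G,G] divides the exponent of the quotient G/Z(G) of G by its center. -/
namespace HPwork

open scoped commutatorElement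

/-- the lower central series of `G` (of the subgroup `⊤`). -/
def lowerCentralSeries (G : Type*) [Group G] (n : ℕ) : Subgroup G :=
  Subgroup.lowerCentralSeries (⊤ : Subgroup G) n

@[simp] lemma lowerCentralSeries_zero {G : Type*} [Group G] :
    lowerCentralSeries G 0 = ⊤ := rfl

lemma lowerCentralSeries_succ {G : Type*} [Group G] (n : ℕ) :
    lowerCentralSeries G (n + 1) = Subgroup.closure
      { x | ∃ p ∈ lowerCentralSeries G n, ∃ q ∈ (⊤ : Subgroup G), ⁅p, q⁆ = x } := rfl

instance lowerCentralSeries_normal {G : Type*} [Group G] (n : ℕ) :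
    (lowerCentralSeries G n).Normal := by
  unfold lowerCentralSeries
  infer_instance

lemma lowerCentralSeries_antitone {G : Type*} [Group G] :
    Antitone (lowerCentralSeries G) :=
  Subgroup.lowerCentralSeries_antitone (S := ⊤)

/-! ### Integer "binomial basis" polynomials, given by coefficient lists -/

/-- `binAux c j k = ∑ d, c[d] * C(j, k+d)`. -/
def binAux : List ℤ → ℕ → ℕ → ℤ
  | [], _, _ => 0
  | a :: c, j, k => a * (j.choose k : ℤ) + binAux c j (k + 1)

/-- Evaluation of a coefficient list in the binomial basis. -/
def binEval (c : List ℤ) (j : ℕ) : ℤ := binAux c j 0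

lemma binAux_succ_right (c : List ℤ) (j k : ℕ) :
    binAux c (j + 1) (k + 1) = binAux c j (k + 1) + binAux c j k := by
  induction c generalizing k with
  | nil => simp [binAux]
  | cons a c ih =>
    simp only [binAux, Nat.choose_succ_succ j k, Nat.cast_add]
    rw [ih (k+1)]
    ring

lemma binAux_zero (c : List ℤ) (k : ℕ) : binAux c 0 (k+1) = 0 := by
  induction c generalizing k with
  | nil => rfl
  | cons a c ih =>
    simp only [binAux, ih, Nat.choose_eq_zero_of_lt (Nat.succ_pos k), Nat.cast_zero]
    ring

lemma binEval_succ (c : List ℤ) (j : ℕ) :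
    binEval c (j + 1) = binEval c j + binEval c.tail j := by
  cases c with
  | nil => simp [binEval, binAux]
  | cons a c =>
    simp only [binEval, binAux, List.tail_cons, Nat.choose_zero_right, Nat.cast_one, mul_one]
    rw [binAux_succ_right]
    show a + (binAux c j 1 + binEval c j) = a + binAux c j 1 + binEval c j
    ring

/-- prefix sums: `∑_{j<M} binEval c j = binEval (0 :: c) M`. -/
lemma sum_range_binEval (c : List ℤ) (M : ℕ) :
    (∑ j ∈ Finset.range M, binEval c j) = binEval (0 :: c) M := by
  induction M with
  | zero =>
    simp [binEval, binAux]
    have := binAux_zero c 0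
    simp [this]
  | succ M ih =>
    rw [Finset.sum_range_succ, ih, binEval_succ]
    simp

/-- pointwise addition of coefficient lists -/
def addP : List ℤ → List ℤ → List ℤ
  | [], c => c
  | c, [] => c
  | a :: c, b :: d => (a + b) :: addP c d

lemma binAux_addP (c d : List ℤ) (j k : ℕ) :
    binAux (addP c d) j k = binAux c j k + binAux d j k := by
  induction c generalizing d k with
  | nil => simp [addP, binAux]
  | cons a c ih =>
    cases d with
    | nil => simp [addP, binAux]
    | cons b d => simp [addP, binAux, ih]; ring

lemma binEval_addP (c d : List ℤ) (j : ℕ) :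
    binEval (addP c d) j = binEval c j + binEval d j := binAux_addP c d j 0

lemma length_addP (c d : List ℤ) : (addP c d).length = max c.length d.length := by
  induction c generalizing d with
  | nil => simp [addP]
  | cons a c ih =>
    cases d with
    | nil => simp [addP]
    | cons b d => simp [addP, ih, Nat.succ_max_succ]

/-- negation -/
def negP (c : List ℤ) : List ℤ := c.map Neg.neg

lemma binAux_negP (c : List ℤ) (j k : ℕ) : binAux (negP c) j k = - binAux c j k := by
  induction c generalizing k with
  | nil => simp [negP, binAux]
  | cons a c ih =>
    show -a * _ + binAux (negP c) j (k+1) = _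
    rw [ih]
    simp [binAux]
    ring

lemma binEval_negP (c : List ℤ) (j : ℕ) : binEval (negP c) j = - binEval c j :=
  binAux_negP c j 0

lemma length_negP (c : List ℤ) : (negP c).length = c.length := List.length_map _

/-- the "partial-sum-through-j" list: evaluates to `binEval (0::c) (j+1)`. -/
def sumP (c : List ℤ) : List ℤ := addP (0 :: c) c

lemma binEval_sumP (c : List ℤ) (j : ℕ) :
    binEval (sumP c) j = binEval (0 :: c) (j + 1) := by
  rw [sumP, binEval_addP, binEval_succ]
  simp

lemma length_sumP (c : List ℤ) : (sumP c).length = c.length + 1 := by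
  rw [sumP, length_addP]
  simp


/-! ### divisibility -/

/-- For `q = p^n` a prime power and `1 ≤ d ≤ p - 1`, `q ∣ C(q, d)`. -/
lemma prime_pow_dvd_choose {p n d : ℕ} (hp : p.Prime) (hd1 : 1 ≤ d) (hdp : d ≤ p - 1) :
    (p ^ n : ℕ) ∣ (p ^ n).choose d := by
  rcases Nat.eq_zero_or_pos n with rfl | hn
  · simpa using Nat.one_dvd _
  set q := p ^ n with hq
  have hq1 : 1 ≤ q := Nat.one_le_pow _ _ hp.pos
  have key : q * (q - 1).choose (d - 1) = q.choose d * d := by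
    have h := Nat.add_one_mul_choose_eq (q - 1) (d - 1)
    have e1 : (q - 1) + 1 = q := by omega
    have e2 : (d - 1) + 1 = d := by omega
    rwa [e1, e2] at h
  have hcop : Nat.Coprime q d := by
    apply Nat.Coprime.pow_left
    rw [hp.coprime_iff_not_dvd]
    intro hdvd
    have := Nat.le_of_dvd (by omega) hdvd
    omega
  have hdvd : q ∣ q.choose d * d := ⟨(q - 1).choose (d - 1), key.symm⟩
  exact (Nat.Coprime.dvd_of_dvd_mul_right hcop hdvd)

/-- if the coefficient list has length `≤ p - 1` then `q ∣ ∑_{j<q} binEval c j`. -/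
lemma dvd_binAux {p n : ℕ} (hp : p.Prime) :
    ∀ (c : List ℤ) (k : ℕ), 1 ≤ k → k + c.length ≤ p →
      ((p ^ n : ℕ) : ℤ) ∣ binAux c (p ^ n) k := by
  intro c
  induction c with
  | nil => intro k _ _; simp [binAux]
  | cons a c ih =>
    intro k hk hlen
    simp only [binAux]
    apply dvd_add
    · apply Dvd.dvd.mul_left
      exact_mod_cast prime_pow_dvd_choose hp hk (by simp at hlen; omega)
    · exact ih (k+1) (by omega) (by simp at hlen ⊢; omega)

lemma dvd_sum_range_binEval {p n : ℕ} (hp : p.Prime) (c : List ℤ)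
    (hlen : c.length + 1 ≤ p) :
    ((p ^ n : ℕ) : ℤ) ∣ ∑ j ∈ Finset.range (p ^ n), binEval c j := by
  rw [sum_range_binEval]
  show ((p^n:ℕ):ℤ) ∣ binAux (0 :: c) (p^n) 0
  simp only [binAux, Nat.choose_zero_right, Nat.cast_one, mul_one, zero_mul, zero_add]
  exact dvd_binAux hp c 1 le_rfl (by omega)

/-! ### group infrastructure -/

section GroupInfra

/-- image of the lower central series under a surjective hom. -/
lemma map_lowerCentralSeries {G H : Type*} [Group G] [Group H] (f : G →* H)
    (hf : Function.Surjective f) (n : ℕ) :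
    (lowerCentralSeries G n).map f = lowerCentralSeries H n := by
  induction n with
  | zero =>
    simpa using Subgroup.map_top_of_surjective f hf
  | succ n ih =>
    show Subgroup.map f ⁅lowerCentralSeries G n, (⊤ : Subgroup G)⁆ = _
    rw [Subgroup.map_commutator, ih, Subgroup.map_top_of_surjective f hf]
    rfl

/-- `⁅γ_{a+1}, γ_{b+1}⁆ ≤ γ_{a+b+2}` (Mathlib indexing). -/
lemma lcs_commutator_le :
    ∀ (b : ℕ) {G : Type*} [Group G] (a : ℕ),
      ⁅lowerCentralSeries G a, lowerCentralSeries G b⁆ ≤ lowerCentralSeries G (a + b + 1) := by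
  intro b
  induction b with
  | zero =>
    intro G _ a
    show ⁅lowerCentralSeries G a, ⊤⁆ ≤ lowerCentralSeries G (a + 0 + 1)
    exact le_of_eq rfl
  | succ b ih =>
    intro G _ a
    set M := lowerCentralSeries G (a + (b+1) + 1) with hM
    set π := QuotientGroup.mk' M with hπ
    have hsurj : Function.Surjective π := QuotientGroup.mk'_surjective M
    have hker : π.ker = M := QuotientGroup.ker_mk' M
    rw [← hker, ← Subgroup.map_eq_bot_iff ⁅lowerCentralSeries G a, lowerCentralSeries G (b+1)⁆]
    rw [Subgroup.map_commutator, map_lowerCentralSeries π hsurj,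
      map_lowerCentralSeries π hsurj]
    set Q := G ⧸ M
    have hQbot : lowerCentralSeries Q (a + (b+1) + 1) = ⊥ := by
      rw [← map_lowerCentralSeries π hsurj]
      exact (Subgroup.map_eq_bot_iff M).mpr hker.ge
    have hsucc : lowerCentralSeries Q (b+1) = ⁅lowerCentralSeries Q b, (⊤ : Subgroup Q)⁆ := rfl
    rw [hsucc, Subgroup.commutator_comm]
    apply Subgroup.commutator_commutator_eq_bot_of_rotate
    · -- ⁅⁅⊤, L a⁆, L b⁆ = ⊥
      rw [Subgroup.commutator_comm (⊤ : Subgroup Q) (lowerCentralSeries Q a)]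
      have h1 : ⁅lowerCentralSeries Q a, (⊤ : Subgroup Q)⁆ = lowerCentralSeries Q (a+1) := rfl
      rw [h1, eq_bot_iff]
      calc ⁅lowerCentralSeries Q (a+1), lowerCentralSeries Q b⁆
          ≤ lowerCentralSeries Q ((a+1) + b + 1) := ih (a+1)
        _ = ⊥ := by rw [show (a+1) + b + 1 = a + (b+1) + 1 by omega, hQbot]
    · -- ⁅⁅L a, L b⁆, ⊤⁆ = ⊥
      rw [eq_bot_iff]
      calc ⁅⁅lowerCentralSeries Q a, lowerCentralSeries Q b⁆, (⊤ : Subgroup Q)⁆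
          ≤ ⁅lowerCentralSeries Q (a + b + 1), (⊤ : Subgroup Q)⁆ :=
            Subgroup.commutator_mono (ih a) le_rfl
        _ = lowerCentralSeries Q (a + b + 2) := rfl
        _ = ⊥ := by rw [show a + b + 2 = a + (b+1) + 1 by omega, hQbot]

end GroupInfra

/-! ### Terms and representations -/

section Machinery

variable {G : Type*} [Group G]

local notation "L" n => lowerCentralSeries G n

lemma mem_lcs_commutator {u v : G} {a b : ℕ}
    (hu : u ∈ (L a)) (hv : v ∈ (L b)) : ⁅u, v⁆ ∈ (L (a+b+1)) :=
  lcs_commutator_le b a (Subgroup.commutator_mem_commutator hu hv)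

/-- a term: a group element `u` at certified weight `w`, with exponent polynomial `c`
(in the binomial basis).  It evaluates at `j` to `u ^ binEval c j`. -/
structure Tm (G : Type*) [Group G] where
  u : G
  w : ℕ
  c : List ℤ

def Tm.ev (T : Tm G) (j : ℕ) : G := T.u ^ (binEval T.c j)

/-- certificate for a term: `u` lies in layer `w`, `w ≥ W`,
and the weight/degree invariant `B + len ≤ w + 1`. -/
def TmOK (W : ℕ) (B : ℤ) (T : Tm G) : Prop :=
  T.u ∈ (L T.w) ∧ W ≤ T.w ∧ B + T.c.length ≤ (T.w : ℤ) + 1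

lemma TmOK.mono {W W' : ℕ} {B B' : ℤ} {T : Tm G} (h : TmOK W B T)
    (hW : W' ≤ W) (hB : B' ≤ B) : TmOK W' B' T :=
  ⟨h.1, le_trans hW h.2.1, le_trans (by linarith [h.2.2]) le_rfl⟩

def evList (Ts : List (Tm G)) (j : ℕ) : G := (Ts.map (fun T => T.ev j)).prod

@[simp] lemma evList_nil (j : ℕ) : evList ([] : List (Tm G)) j = 1 := rfl

lemma evList_cons (T : Tm G) (Ts : List (Tm G)) (j : ℕ) :
    evList (T :: Ts) j = T.ev j * evList Ts j := by
  simp [evList]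

lemma evList_append (Ts₁ Ts₂ : List (Tm G)) (j : ℕ) :
    evList (Ts₁ ++ Ts₂) j = evList Ts₁ j * evList Ts₂ j := by
  simp [evList]

/-- a representation of a sequence of group elements -/
def HasRep (W : ℕ) (B : ℤ) (f : ℕ → G) : Prop :=
  ∃ Ts : List (Tm G), (∀ T ∈ Ts, TmOK W B T) ∧ ∀ j, f j = evList Ts j

lemma HasRep.mono {W W' : ℕ} {B B' : ℤ} {f : ℕ → G} (h : HasRep W B f)
    (hW : W' ≤ W) (hB : B' ≤ B) : HasRep W' B' f := by
  obtain ⟨Ts, h1, h2⟩ := h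
  exact ⟨Ts, fun T hT => (h1 T hT).mono hW hB, h2⟩

lemma HasRep.congr {W : ℕ} {B : ℤ} {f g : ℕ → G} (h : HasRep W B f)
    (hfg : ∀ j, f j = g j) : HasRep W B g := by
  obtain ⟨Ts, h1, h2⟩ := h
  exact ⟨Ts, h1, fun j => (hfg j).symm.trans (h2 j)⟩

lemma HasRep.one (W : ℕ) (B : ℤ) : HasRep W B (fun _ : ℕ => (1 : G)) :=
  ⟨[], by simp, fun j => rfl⟩

lemma HasRep.mul {W : ℕ} {B : ℤ} {f g : ℕ → G} (hf : HasRep W B f) (hg : HasRep W B g) :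
    HasRep W B (fun j => f j * g j) := by
  obtain ⟨Ts₁, h1, h2⟩ := hf
  obtain ⟨Ts₂, h3, h4⟩ := hg
  refine ⟨Ts₁ ++ Ts₂, ?_, fun j => ?_⟩
  · intro T hT
    rcases List.mem_append.mp hT with h | h
    · exact h1 T h
    · exact h3 T h
  · rw [evList_append, ← h2, ← h4]

@[simp] lemma binEval_one_list (j : ℕ) : binEval [(1:ℤ)] j = 1 := by
  simp [binEval, binAux]

lemma HasRep.const {W : ℕ} {B : ℤ} {u : G} {w : ℕ} (hu : u ∈ (L w)) (hW : W ≤ w)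
    (hB : B ≤ (w : ℤ)) : HasRep W B (fun _ : ℕ => u) := by
  refine ⟨[⟨u, w, [(1:ℤ)]⟩], ?_, fun j => ?_⟩
  · intro T hT
    simp only [List.mem_singleton] at hT
    subst hT
    exact ⟨hu, hW, by simp; linarith⟩
  · simp [evList, Tm.ev]

lemma Tm.ev_inv (T : Tm G) (j : ℕ) :
    (Tm.mk T.u⁻¹ T.w T.c).ev j = (T.ev j)⁻¹ := by
  simp [Tm.ev, inv_zpow]

lemma HasRep.inv {W : ℕ} {B : ℤ} {f : ℕ → G} (hf : HasRep W B f) :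
    HasRep W B (fun j => (f j)⁻¹) := by
  obtain ⟨Ts, h1, h2⟩ := hf
  refine ⟨(Ts.map (fun T => Tm.mk T.u⁻¹ T.w T.c)).reverse, ?_, fun j => ?_⟩
  · intro T hT
    simp only [List.mem_reverse, List.mem_map] at hT
    obtain ⟨S, hS, rfl⟩ := hT
    obtain ⟨hS1, hS2, hS3⟩ := h1 S hS
    exact ⟨inv_mem hS1, hS2, hS3⟩
  · show (f j)⁻¹ = _
    rw [h2 j]
    unfold evList
    rw [List.map_reverse, List.map_map]
    rw [List.prod_inv_reverse]
    congr 1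
    rw [List.map_map]
    congr 1
    apply List.map_congr_left
    intro T _
    exact (Tm.ev_inv T j).symm

/-! ### ordered products over ranges -/

def prodRange (f : ℕ → G) (M : ℕ) : G := ((List.range M).map f).prod

@[simp] lemma prodRange_zero (f : ℕ → G) : prodRange f 0 = 1 := rfl

lemma prodRange_succ (f : ℕ → G) (M : ℕ) :
    prodRange f (M + 1) = prodRange f M * f M := by
  simp [prodRange, List.range_succ]

lemma prodRange_congr {f g : ℕ → G} (h : ∀ j, f j = g j) (M : ℕ) :
    prodRange f M = prodRange g M := by
  unfold prodRange
  congr 1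
  exact List.map_congr_left (fun j _ => h j)

/-! ### element identities -/

lemma conj_eq_mul_commutator (g x : G) : g * x * g⁻¹ = x * ⁅x⁻¹, g⁆ := by
  group

lemma swap_eq (x y : G) : x * y = y * x * ⁅x⁻¹, y⁻¹⁆ := by
  group

lemma commutator_mul_left (x y z : G) : ⁅x * y, z⁆ = x * ⁅y, z⁆ * x⁻¹ * ⁅x, z⁆ := by
  group

lemma commutator_mul_right (x y z : G) : ⁅x, y * z⁆ = ⁅x, y⁆ * (y * ⁅x, z⁆ * y⁻¹) := by
  group

/-- The peeling identity: pulling the leading power-factor out of an ordered product. -/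
lemma peel_identity (u : G) (t : List ℤ) (g : ℕ → G) (M : ℕ) :
    prodRange (fun j => u ^ (binEval t j) * g j) M
      = prodRange (fun j => u ^ (binEval (sumP t) j) * g j * (u ^ (binEval (sumP t) j))⁻¹) M
        * u ^ (binEval (0 :: t) M) := by
  induction M with
  | zero => simp [binEval, binAux, binAux_zero]
  | succ M ih =>
    rw [prodRange_succ, prodRange_succ, ih]
    have hsum : binEval (0 :: t) (M + 1) = binEval (0 :: t) M + binEval t M := by
      rw [binEval_succ]; rfl
    have hS : binEval (sumP t) M = binEval (0 :: t) (M + 1) := binEval_sumP t M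
    rw [hS, hsum, zpow_add]
    group

/-! ### helper lemmas for the trivial (deep) cases -/

lemma eq_one_of_deep {N : ℕ} (hN : (L N) = ⊥) {u : G} {m : ℕ} (hm : N ≤ m)
    (hu : u ∈ (L m)) : u = 1 := by
  have : u ∈ (L N) := lowerCentralSeries_antitone hm hu
  rw [hN] at this
  simpa using this

lemma evList_mem {W : ℕ} {B : ℤ} {Ts : List (Tm G)} (h : ∀ T ∈ Ts, TmOK W B T) (j : ℕ) :
    evList Ts j ∈ (L W) := by
  induction Ts with
  | nil => simp [evList]
  | cons T rest ih =>
    rw [evList_cons]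
    refine Subgroup.mul_mem _ ?_ (ih (fun S hS => h S (List.mem_cons_of_mem _ hS)))
    obtain ⟨h1, h2, _⟩ := h T (List.mem_cons_self)
    exact Subgroup.zpow_mem _ (lowerCentralSeries_antitone h2 h1) _

lemma prodRange_one (M : ℕ) : prodRange (fun _ => (1:G)) M = 1 := by
  induction M with
  | zero => rfl
  | succ M ih => rw [prodRange_succ, ih, mul_one]

/-! ### The four statements of the collection machinery -/

variable (G) in
/-- Summation: ordered products over initial segments of represented sequences
are represented (with family bound dropping by one). -/
def SummStmt (P : ℕ) : Prop :=
  ∀ (B : ℤ), 0 ≤ B → ∀ (f : ℕ → G), HasRep P B f →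
    HasRep P (B - 1) (fun M => prodRange f M)

variable (G) in
/-- Conjugation of a represented sequence by a power `v ^ s(j)`. -/
def ConjStmt (P : ℕ) : Prop :=
  ∀ (B : ℤ), -1 ≤ B → ∀ (Ts : List (Tm G)), (∀ T ∈ Ts, TmOK P B T) →
  ∀ (v : G) (b : ℕ) (s : List ℤ) (B₂ : ℤ), v ∈ (L b) →
    B₂ + s.length ≤ (b:ℤ) + 1 → -1 ≤ B₂ →
    ∃ Ts' : List (Tm G), (∀ T ∈ Ts', TmOK P B T) ∧
      (∀ j, v ^ (binEval s j) * evList Ts j * (v ^ (binEval s j))⁻¹ = evList Ts' j) ∧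
      (Ts'.countP (fun T => T.w ≤ P) ≤ Ts.countP (fun T => T.w ≤ P))

variable (G) in
/-- Commutators of two power sequences. -/
def AtomStmt (P : ℕ) : Prop :=
  ∀ (u v : G) (a b : ℕ) (t s : List ℤ) (B₁ B₂ : ℤ),
    u ∈ (L a) → v ∈ (L b) →
    B₁ + t.length ≤ (a:ℤ) + 1 → B₂ + s.length ≤ (b:ℤ) + 1 → -1 ≤ B₁ → -1 ≤ B₂ →
    P ≤ a + b + 1 →
    HasRep (a+b+1) (B₁ + B₂ + 1) (fun j => ⁅u ^ (binEval t j), v ^ (binEval s j)⁆)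

variable (G) in
/-- Commutator of a represented sequence with a power sequence. -/
def BrkcStmt (P : ℕ) : Prop :=
  ∀ (W₁ : ℕ) (B : ℤ), -1 ≤ B → ∀ (f : ℕ → G), HasRep W₁ B f →
  ∀ (v : G) (b : ℕ) (s : List ℤ) (B₂ : ℤ), v ∈ (L b) →
    B₂ + s.length ≤ (b:ℤ) + 1 → -1 ≤ B₂ → P ≤ W₁ + b + 1 →
    HasRep (W₁ + b + 1) (B + B₂ + 1) (fun j => ⁅f j, v ^ (binEval s j)⁆)

/-- wrapper: conjugation statement applied to `HasRep`. -/
lemma conj_hasRep {G : Type*} [Group G] {P : ℕ} (hc : ConjStmt G P) {B : ℤ} (hB : -1 ≤ B)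
    {f : ℕ → G} (hf : HasRep P B f) {v : G} {b : ℕ} {s : List ℤ} {B₂ : ℤ}
    (hv : v ∈ lowerCentralSeries G b) (hs : B₂ + s.length ≤ (b:ℤ) + 1) (hB₂ : -1 ≤ B₂) :
    HasRep P B (fun j => v ^ (binEval s j) * f j * (v ^ (binEval s j))⁻¹) := by
  obtain ⟨Ts, hTs, hfe⟩ := hf
  obtain ⟨Ts', h1, h2, _⟩ := hc B hB Ts hTs v b s B₂ hv hs hB₂
  refine ⟨Ts', h1, fun j => ?_⟩
  show v ^ binEval s j * f j * (v ^ binEval s j)⁻¹ = _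
  rw [hfe j]
  exact h2 j

/-- move a term of weight exactly `P` to the front of a represented list,
modifying by deeper correction terms. -/
lemma move_front {P : ℕ} (hatom : AtomStmt G (P+1)) {B : ℤ} (hB : 0 ≤ B) :
    ∀ (Ts : List (Tm G)), (∀ T ∈ Ts, TmOK P B T) →
    (∀ T ∈ Ts, T.w ≠ P) ∨
    ∃ (T₁ : Tm G) (Ts' : List (Tm G)), T₁.w = P ∧ (∀ T ∈ T₁ :: Ts', TmOK P B T) ∧
      (∀ j, evList Ts j = evList (T₁ :: Ts') j) ∧
      ((T₁ :: Ts').countP (fun T => T.w ≤ P) ≤ Ts.countP (fun T => T.w ≤ P)) := by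
  intro Ts
  induction Ts with
  | nil => intro _; left; simp
  | cons T rest ih =>
    intro hTs
    by_cases hT : T.w = P
    · right
      exact ⟨T, rest, hT, hTs, fun j => rfl, le_rfl⟩
    · rcases ih (fun S hS => hTs S (List.mem_cons_of_mem _ hS)) with hall | ⟨T₁, Ts', hT₁, hOK, hEv, hCnt⟩
      · left
        intro S hS
        rcases List.mem_cons.mp hS with rfl | hS'
        · exact hT
        · exact hall S hS'
      · right
        obtain ⟨hTu, hTw, hTc⟩ := hTs T (List.mem_cons_self)
        obtain ⟨hT₁u, hT₁w, hT₁c⟩ := hOK T₁ (List.mem_cons_self)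
        obtain ⟨Cs, hCsOK, hCsEv⟩ :=
          hatom T.u⁻¹ T₁.u⁻¹ T.w T₁.w T.c T₁.c B B (inv_mem hTu) (inv_mem hT₁u)
            hTc hT₁c (by omega) (by omega) (by omega)
        refine ⟨T₁, T :: (Cs ++ Ts'), hT₁, ?_, fun j => ?_, ?_⟩
        · intro S hS
          rcases List.mem_cons.mp hS with rfl | hS'
          · exact hOK S (List.mem_cons_self)
          rcases List.mem_cons.mp hS' with rfl | hS''
          · exact hTs S (List.mem_cons_self)
          rcases List.mem_append.mp hS'' with h | h
          · exact (hCsOK S h).mono (by omega) (by omega)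
          · exact hOK S (List.mem_cons_of_mem _ h)
        · have e0 : evList rest j = T₁.ev j * evList Ts' j := by
            rw [hEv j, evList_cons]
          have e1 : ⁅T.u⁻¹ ^ binEval T.c j, T₁.u⁻¹ ^ binEval T₁.c j⁆ = evList Cs j := hCsEv j
          have e3 : T.u⁻¹ ^ binEval T.c j = (T.ev j)⁻¹ := Tm.ev_inv T j
          have e4 : T₁.u⁻¹ ^ binEval T₁.c j = (T₁.ev j)⁻¹ := Tm.ev_inv T₁ j
          rw [evList_cons, e0, evList_cons, evList_cons, evList_append, ← e1, e3, e4]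
          group
        · have hCs0 : Cs.countP (fun T => T.w ≤ P) = 0 := by
            rw [List.countP_eq_zero]
            intro S hS
            obtain ⟨_, hw, _⟩ := hCsOK S hS
            simp only [decide_eq_true_eq]
            omega
          simp only [List.countP_cons, List.countP_append, hCs0] at hCnt ⊢
          omega

theorem pack {N : ℕ} (hN : (L N) = ⊥) :
    ∀ (d P : ℕ), N ≤ P + d →
      ConjStmt G P ∧ SummStmt G P ∧ AtomStmt G P ∧ BrkcStmt G P := by
  intro d
  induction d with
  | zero =>
    intro P hP
    simp only [Nat.add_zero] at hP
    have hdeep : ∀ (B : ℤ) (Ts : List (Tm G)), (∀ T ∈ Ts, TmOK P B T) →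
        ∀ j, evList Ts j = 1 := by
      intro B Ts hTs j
      have := evList_mem hTs j
      exact eq_one_of_deep hN hP this
    refine ⟨?_, ?_, ?_, ?_⟩
    · -- Conj
      intro B hB Ts hTs v b s B₂ hv hB₂ hB₂'
      refine ⟨[], by simp, fun j => ?_, by simp⟩
      rw [hdeep B Ts hTs j]
      simp [evList]
    · -- Summ
      intro B hB f ⟨Ts, hTs, hf⟩
      refine ⟨[], by simp, fun M => ?_⟩
      have h1 : ∀ j, f j = 1 := fun j => (hf j).trans (hdeep B Ts hTs j)
      show prodRange f M = evList [] M
      rw [prodRange_congr h1, prodRange_one]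
      rfl
    · -- Atom
      intro u v a b t s B₁ B₂ hu hv ht hs hB₁ hB₂ hP'
      refine ⟨[], by simp, fun j => ?_⟩
      have h1 : ⁅u ^ (binEval t j), v ^ (binEval s j)⁆ ∈ (L (a+b+1)) :=
        mem_lcs_commutator (Subgroup.zpow_mem _ hu _) (Subgroup.zpow_mem _ hv _)
      show ⁅u ^ (binEval t j), v ^ (binEval s j)⁆ = evList [] j
      rw [eq_one_of_deep hN (le_trans hP hP') h1]
      rfl
    · -- Brkc
      intro W₁ B hB f ⟨Ts, hTs, hf⟩ v b s B₂ hv hs hB₂ hP'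
      refine ⟨[], by simp, fun j => ?_⟩
      have hf' : f j ∈ (L W₁) := by rw [hf j]; exact evList_mem hTs j
      have h1 : ⁅f j, v ^ (binEval s j)⁆ ∈ (L (W₁+b+1)) :=
        mem_lcs_commutator hf' (Subgroup.zpow_mem _ hv _)
      show ⁅f j, v ^ (binEval s j)⁆ = evList [] j
      rw [eq_one_of_deep hN (le_trans hP hP') h1]
      rfl
  | succ d IH =>
    intro P hP
    have IHnext : ∀ P', P + 1 ≤ P' → ConjStmt G P' ∧ SummStmt G P' ∧ AtomStmt G P' ∧ BrkcStmt G P' := by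
      intro P' hP'
      exact IH P' (by omega)
    have hconj : ConjStmt G P := by
      intro B hB Ts hTs v b s B₂ hv hs hB₂
      induction Ts with
      | nil =>
        refine ⟨[], by simp, fun j => ?_, by simp⟩
        simp [evList]
      | cons T rest ihrest =>
        obtain ⟨Ts₂, h2a, h2b, h2c⟩ := ihrest (fun S hS => hTs S (List.mem_cons_of_mem _ hS))
        obtain ⟨hTu, hTw, hTc⟩ := hTs T (List.mem_cons_self)
        have hatom : AtomStmt G (P+1) := (IHnext (P+1) le_rfl).2.2.1
        obtain ⟨Cs, hCsOK, hCsEv⟩ :=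
          hatom T.u⁻¹ v T.w b T.c s B B₂ (inv_mem hTu) hv hTc hs hB hB₂ (by omega)
        refine ⟨T :: (Cs ++ Ts₂), ?_, fun j => ?_, ?_⟩
        · intro S hS
          rcases List.mem_cons.mp hS with rfl | hS'
          · exact hTs S (List.mem_cons_self)
          rcases List.mem_append.mp hS' with h | h
          · exact (hCsOK S h).mono (by omega) (by omega)
          · exact h2a S h
        · have e1 : ⁅T.u⁻¹ ^ binEval T.c j, v ^ binEval s j⁆ = evList Cs j := hCsEv j
          have e2 : v ^ binEval s j * evList rest j * (v ^ binEval s j)⁻¹ = evList Ts₂ j :=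
            h2b j
          have e3 : T.u⁻¹ ^ binEval T.c j = (T.ev j)⁻¹ := Tm.ev_inv T j
          rw [evList_cons, evList_cons, evList_append, ← e1, ← e2, e3]
          group
        · have hCs0 : Cs.countP (fun T => T.w ≤ P) = 0 := by
            rw [List.countP_eq_zero]
            intro S hS
            obtain ⟨_, hw, _⟩ := hCsOK S hS
            simp only [decide_eq_true_eq]
            omega
          rw [List.countP_cons, List.countP_cons, List.countP_append, hCs0]
          omega
    have hsumm : SummStmt G P := by
      intro B hB f hfrep
      have main : ∀ (k : ℕ) (Ts : List (Tm G)), (∀ T ∈ Ts, TmOK P B T) →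
          Ts.countP (fun T => T.w ≤ P) ≤ k →
          ∀ (f : ℕ → G), (∀ j, f j = evList Ts j) →
          HasRep P (B - 1) (fun M => prodRange f M) := by
        intro k
        induction k with
        | zero =>
          intro Ts hTs hcnt f hf
          rcases move_front ((IHnext (P+1) le_rfl).2.2.1) hB Ts hTs with hall | ⟨T₁, Ts', hT₁, _, _, hCnt⟩
          · have : HasRep (P+1) B f := by
              refine ⟨Ts, fun T hT => ?_, hf⟩
              obtain ⟨h1, h2, h3⟩ := hTs T hT
              have := hall T hT
              exact ⟨h1, by omega, h3⟩
            exact (((IHnext (P+1) le_rfl).2.1) B hB f this).mono (by omega) le_rfl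
          · exfalso
            have : 0 < (T₁ :: Ts').countP (fun T => T.w ≤ P) := by
              rw [List.countP_cons]
              have : T₁.w ≤ P := le_of_eq hT₁
              simp [this]
            omega
        | succ k ihk =>
          intro Ts hTs hcnt f hf
          rcases move_front ((IHnext (P+1) le_rfl).2.2.1) hB Ts hTs with hall | ⟨T₁, Ts', hT₁, hOK, hEv, hCnt⟩
          · have : HasRep (P+1) B f := by
              refine ⟨Ts, fun T hT => ?_, hf⟩
              obtain ⟨h1, h2, h3⟩ := hTs T hT
              have := hall T hT
              exact ⟨h1, by omega, h3⟩
            exact (((IHnext (P+1) le_rfl).2.1) B hB f this).mono (by omega) le_rfl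
          · obtain ⟨hT₁u, hT₁w, hT₁c⟩ := hOK T₁ (List.mem_cons_self)
            have hTs' : ∀ T ∈ Ts', TmOK P B T := fun S hS => hOK S (List.mem_cons_of_mem _ hS)
            obtain ⟨Ts₂, h2a, h2b, h2c⟩ :=
              hconj B (by omega) Ts' hTs' T₁.u T₁.w (sumP T₁.c) (B - 1) hT₁u
                (by rw [length_sumP]; push_cast; omega) (by omega)
            have hcnt₂ : Ts₂.countP (fun T => T.w ≤ P) ≤ k := by
              have h1 : (T₁ :: Ts').countP (fun T => T.w ≤ P)
                  = Ts'.countP (fun T => T.w ≤ P) + 1 := by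
                rw [List.countP_cons]
                have : T₁.w ≤ P := le_of_eq hT₁
                simp [this]
              omega
            obtain ⟨Ts₃, h3a, h3b⟩ :=
              ihk Ts₂ h2a hcnt₂ (fun j => evList Ts₂ j) (fun j => rfl)
            refine ⟨Ts₃ ++ [⟨T₁.u, T₁.w, 0 :: T₁.c⟩], ?_, fun M => ?_⟩
            · intro S hS
              rcases List.mem_append.mp hS with h | h
              · exact h3a S h
              · simp only [List.mem_singleton] at h
                subst h
                refine ⟨hT₁u, hT₁w, ?_⟩
                simp only [List.length_cons]
                push_cast
                omega
            · have step1 : prodRange f M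
                  = prodRange (fun j => T₁.u ^ binEval T₁.c j * evList Ts' j) M := by
                apply prodRange_congr
                intro j
                rw [hf j, hEv j, evList_cons]
                rfl
              have step2 := peel_identity T₁.u T₁.c (fun j => evList Ts' j) M
              have step3 : prodRange (fun j => T₁.u ^ binEval (sumP T₁.c) j * evList Ts' j
                    * (T₁.u ^ binEval (sumP T₁.c) j)⁻¹) M
                  = prodRange (fun j => evList Ts₂ j) M := by
                apply prodRange_congr
                intro j
                exact h2b j
              show prodRange f M = evList (Ts₃ ++ [⟨T₁.u, T₁.w, 0 :: T₁.c⟩]) M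
              rw [step1, step2, step3, evList_append, ← h3b M]
              congr 1
              simp [evList, Tm.ev]
      obtain ⟨Ts, hTs, hf⟩ := hfrep
      exact main _ Ts hTs le_rfl f hf
    have hatom : AtomStmt G P := by
      intro u v a b t s₀l B₁ B₂ hu hv ht hs hB₁ hB₂ hP'
      have main : ∀ (n : ℕ) (t s : List ℤ) (B₁ B₂ : ℤ), t.length + s.length ≤ n →
          B₁ + t.length ≤ (a:ℤ) + 1 → B₂ + s.length ≤ (b:ℤ) + 1 → -1 ≤ B₁ → -1 ≤ B₂ →
          HasRep (a+b+1) (B₁ + B₂ + 1) (fun j => ⁅u ^ (binEval t j), v ^ (binEval s j)⁆) := by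
        have hconjD : ConjStmt G (a+b+1) ∧ SummStmt G (a+b+1) := by
          rcases Nat.eq_or_lt_of_le hP' with heq | hlt
          · exact heq ▸ ⟨hconj, hsumm⟩
          · exact ⟨(IHnext _ hlt).1, (IHnext _ hlt).2.1⟩
        have hbrkcD : BrkcStmt G (P+1) := (IHnext (P+1) le_rfl).2.2.2
        intro n
        induction n with
        | zero =>
          intro t s B₁ B₂ hlen ht hs hB₁ hB₂
          have ht0 : t = [] := List.length_eq_zero_iff.mp (by omega)
          subst ht0
          refine ⟨[], by simp, fun j => ?_⟩
          show ⁅u ^ (0:ℤ), v ^ binEval s j⁆ = 1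
          group
        | succ n ihn =>
          intro t s B₁ B₂ hlen ht hs hB₁ hB₂
          rcases t with _ | ⟨t₀, t'⟩
          · refine ⟨[], by simp, fun j => ?_⟩
            show ⁅u ^ (0:ℤ), v ^ binEval s j⁆ = 1
            group
          rcases s with _ | ⟨s₀, s'⟩
          · refine ⟨[], by simp, fun j => ?_⟩
            show ⁅u ^ binEval (t₀ :: t') j, v ^ (0:ℤ)⁆ = 1
            group
          set tl := t₀ :: t' with htl
          set sl := s₀ :: s' with hsl
          have hlent : (tl.length : ℤ) = t'.length + 1 := by simp [htl]
          have hlens : (sl.length : ℤ) = s'.length + 1 := by simp [hsl]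
          have X₁rep : HasRep (a+b+1) (B₁ + B₂ + 2)
              (fun j => u ^ binEval tl j * ⁅u ^ binEval t' j, v ^ binEval sl j⁆ * (u ^ binEval tl j)⁻¹) := by
            have inner := ihn t' sl (B₁+1) B₂ (by simp [htl, hsl] at hlen ⊢; omega)
              (by omega) hs (by omega) hB₂
            have h2 := conj_hasRep hconjD.1 (B := B₁+1+B₂+1) (by omega) inner hu ht hB₁
            exact (h2.congr (fun j => rfl)).mono le_rfl (by omega)
          have X₂rep : HasRep (a+b+1) (B₁ + B₂ + 2)
              (fun j => u ^ binEval tl j * ((v ^ binEval sl j) * ⁅u ^ binEval t' j, v ^ binEval s' j⁆ * (v ^ binEval sl j)⁻¹) * (u ^ binEval tl j)⁻¹) := by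
            have inner := ihn t' s' (B₁+1) (B₂+1) (by simp [htl, hsl] at hlen ⊢; omega)
              (by omega) (by omega) (by omega) (by omega)
            have c1 := conj_hasRep hconjD.1 (B := B₁+1+(B₂+1)+1) (by omega) inner hv hs hB₂
            have c2 := conj_hasRep hconjD.1 (B := B₁+1+(B₂+1)+1) (by omega) c1 hu ht hB₁
            exact (c2.congr (fun j => rfl)).mono le_rfl (by omega)
          have X₃rep : HasRep (a+b+1) (B₁ + B₂ + 2)
              (fun j => (v ^ binEval sl j) * ⁅u ^ binEval tl j, v ^ binEval s' j⁆ * (v ^ binEval sl j)⁻¹) := by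
            have inner := ihn tl s' B₁ (B₂+1) (by simp [htl, hsl] at hlen ⊢; omega)
              ht (by omega) hB₁ (by omega)
            have h2 := conj_hasRep hconjD.1 (B := B₁+(B₂+1)+1) (by omega) inner hv hs hB₂
            exact (h2.congr (fun j => rfl)).mono le_rfl (by omega)
          have Zrep : HasRep (a+b+1) (B₁ + B₂ + 2)
              (fun j => (u ^ binEval tl j * ⁅u ^ binEval t' j, v ^ binEval sl j⁆ * (u ^ binEval tl j)⁻¹) * (u ^ binEval tl j * ((v ^ binEval sl j) * ⁅u ^ binEval t' j, v ^ binEval s' j⁆ * (v ^ binEval sl j)⁻¹) * (u ^ binEval tl j)⁻¹)) := X₁rep.mul X₂rep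
          have Zinvrep : HasRep (a+b+1) (B₁ + B₂ + 2)
              (fun j => ((u ^ binEval tl j * ⁅u ^ binEval t' j, v ^ binEval sl j⁆ * (u ^ binEval tl j)⁻¹) * (u ^ binEval tl j * ((v ^ binEval sl j) * ⁅u ^ binEval t' j, v ^ binEval s' j⁆ * (v ^ binEval sl j)⁻¹) * (u ^ binEval tl j)⁻¹))⁻¹) := Zrep.inv
          have brkc : ∀ (v' : G) (b' : ℕ) (s'' : List ℤ) (B₂' : ℤ),
              v' ∈ (L b') → B₂' + s''.length ≤ (b':ℤ) + 1 → -1 ≤ B₂' →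
              HasRep (a+b+1) (B₁ + B₂ + 2)
                (fun j => ⁅((u ^ binEval tl j * ⁅u ^ binEval t' j, v ^ binEval sl j⁆ * (u ^ binEval tl j)⁻¹) * (u ^ binEval tl j * ((v ^ binEval sl j) * ⁅u ^ binEval t' j, v ^ binEval s' j⁆ * (v ^ binEval sl j)⁻¹) * (u ^ binEval tl j)⁻¹))⁻¹, v' ^ binEval s'' j⁆) := by
            intro v' b' s'' B₂' hv' hs'' hB₂'
            have h := hbrkcD (a+b+1) (B₁+B₂+2) (by omega) _ Zinvrep v' b' s'' B₂'
              hv' hs'' hB₂' (by omega)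
            exact (h.congr (fun j => rfl)).mono (by omega) (by omega)
          have F₁rep := brkc v b sl B₂ hv hs hB₂
          have F₂rep := brkc u a tl B₁ hu ht hB₁
          have F₃rep := brkc v⁻¹ b sl B₂ (inv_mem hv) hs hB₂
          have F₄rep := brkc u⁻¹ a tl B₁ (inv_mem hu) ht hB₁
          have G₄rep := conj_hasRep hconjD.1 (B := B₁+B₂+2) (by omega) F₄rep
            (inv_mem hv) hs hB₂
          have H₃₄rep := F₃rep.mul G₄rep
          have G₃₄rep := conj_hasRep hconjD.1 (B := B₁+B₂+2) (by omega) H₃₄rep hu ht hB₁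
          have H₂₃₄rep := F₂rep.mul G₃₄rep
          have G₂₃₄rep := conj_hasRep hconjD.1 (B := B₁+B₂+2) (by omega) H₂₃₄rep hv hs hB₂
          have Yrep' := F₁rep.mul G₂₃₄rep
          have Yrep : HasRep (a+b+1) (B₁+B₂+2)
              (fun j => ⁅((u ^ binEval tl j * ⁅u ^ binEval t' j, v ^ binEval sl j⁆ * (u ^ binEval tl j)⁻¹) * (u ^ binEval tl j * ((v ^ binEval sl j) * ⁅u ^ binEval t' j, v ^ binEval s' j⁆ * (v ^ binEval sl j)⁻¹) * (u ^ binEval tl j)⁻¹))⁻¹, (⁅u ^ binEval tl j, v ^ binEval sl j⁆)⁻¹⁆) := by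
            apply Yrep'.congr
            intro j
            show (⁅((u ^ binEval tl j * ⁅u ^ binEval t' j, v ^ binEval sl j⁆ * (u ^ binEval tl j)⁻¹) * (u ^ binEval tl j * ((v ^ binEval sl j) * ⁅u ^ binEval t' j, v ^ binEval s' j⁆ * (v ^ binEval sl j)⁻¹) * (u ^ binEval tl j)⁻¹))⁻¹, v ^ binEval sl j⁆) * (v ^ binEval sl j * ((⁅((u ^ binEval tl j * ⁅u ^ binEval t' j, v ^ binEval sl j⁆ * (u ^ binEval tl j)⁻¹) * (u ^ binEval tl j * ((v ^ binEval sl j) * ⁅u ^ binEval t' j, v ^ binEval s' j⁆ * (v ^ binEval sl j)⁻¹) * (u ^ binEval tl j)⁻¹))⁻¹, u ^ binEval tl j⁆) * (u ^ binEval tl j * ((⁅((u ^ binEval tl j * ⁅u ^ binEval t' j, v ^ binEval sl j⁆ * (u ^ binEval tl j)⁻¹) * (u ^ binEval tl j * ((v ^ binEval sl j) * ⁅u ^ binEval t' j, v ^ binEval s' j⁆ * (v ^ binEval sl j)⁻¹) * (u ^ binEval tl j)⁻¹))⁻¹, v⁻¹ ^ binEval sl j⁆) * (v⁻¹ ^ binEval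 sl j * (⁅((u ^ binEval tl j * ⁅u ^ binEval t' j, v ^ binEval sl j⁆ * (u ^ binEval tl j)⁻¹) * (u ^ binEval tl j * ((v ^ binEval sl j) * ⁅u ^ binEval t' j, v ^ binEval s' j⁆ * (v ^ binEval sl j)⁻¹) * (u ^ binEval tl j)⁻¹))⁻¹, u⁻¹ ^ binEval tl j⁆) * (v⁻¹ ^ binEval sl j)⁻¹)) * (u ^ binEval tl j)⁻¹)) * (v ^ binEval sl j)⁻¹) = ⁅((u ^ binEval tl j * ⁅u ^ binEval t' j, v ^ binEval sl j⁆ * (u ^ binEval tl j)⁻¹) * (u ^ binEval tl j * ((v ^ binEval sl j) * ⁅u ^ binEval t' j, v ^ binEval s' j⁆ * (v ^ binEval sl j)⁻¹) * (u ^ binEval tl j)⁻¹))⁻¹, (⁅u ^ binEval tl j, v ^ binEval sl j⁆)⁻¹⁆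
            simp only [inv_zpow]
            group
          have δrep : HasRep (a+b+1) (B₁+B₂+2)
              (fun j => (((u ^ binEval tl j * ⁅u ^ binEval t' j, v ^ binEval sl j⁆ * (u ^ binEval tl j)⁻¹) * (u ^ binEval tl j * ((v ^ binEval sl j) * ⁅u ^ binEval t' j, v ^ binEval s' j⁆ * (v ^ binEval sl j)⁻¹) * (u ^ binEval tl j)⁻¹)) * (⁅((u ^ binEval tl j * ⁅u ^ binEval t' j, v ^ binEval sl j⁆ * (u ^ binEval tl j)⁻¹) * (u ^ binEval tl j * ((v ^ binEval sl j) * ⁅u ^ binEval t' j, v ^ binEval s' j⁆ * (v ^ binEval sl j)⁻¹) * (u ^ binEval tl j)⁻¹))⁻¹, (⁅u ^ binEval tl j, v ^ binEval sl j⁆)⁻¹⁆)) * ((v ^ binEval sl j) * ⁅u ^ binEval tl j, v ^ binEval s' j⁆ * (v ^ binEval sl j)⁻¹)) := (Zrep.mul Yrep).mul X₃rep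
          have keyid : ∀ j, ⁅u ^ binEval tl (j+1), v ^ binEval sl (j+1)⁆
              = ⁅u ^ binEval tl j, v ^ binEval sl j⁆ * ((((u ^ binEval tl j * ⁅u ^ binEval t' j, v ^ binEval sl j⁆ * (u ^ binEval tl j)⁻¹) * (u ^ binEval tl j * ((v ^ binEval sl j) * ⁅u ^ binEval t' j, v ^ binEval s' j⁆ * (v ^ binEval sl j)⁻¹) * (u ^ binEval tl j)⁻¹)) * (⁅((u ^ binEval tl j * ⁅u ^ binEval t' j, v ^ binEval sl j⁆ * (u ^ binEval tl j)⁻¹) * (u ^ binEval tl j * ((v ^ binEval sl j) * ⁅u ^ binEval t' j, v ^ binEval s' j⁆ * (v ^ binEval sl j)⁻¹) * (u ^ binEval tl j)⁻¹))⁻¹, (⁅u ^ binEval tl j, v ^ binEval sl j⁆)⁻¹⁆)) * ((v ^ binEval sl j) * ⁅u ^ binEval tl j, v ^ binEval s' j⁆ * (v ^ binEval sl j)⁻¹)) := by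
            intro j
            have e1 : u ^ binEval tl (j+1) = (u ^ binEval tl j) * (u ^ binEval t' j) := by
              rw [binEval_succ]
              show u ^ (binEval tl j + binEval t' j) = _
              rw [zpow_add]
            have e2 : v ^ binEval sl (j+1) = (v ^ binEval sl j) * (v ^ binEval s' j) := by
              rw [binEval_succ]
              show v ^ (binEval sl j + binEval s' j) = _
              rw [zpow_add]
            rw [e1, e2]
            group
          have telescope : ∀ M, ⁅u ^ binEval tl M, v ^ binEval sl M⁆
              = ⁅u ^ binEval tl 0, v ^ binEval sl 0⁆
                * prodRange (fun j => (((u ^ binEval tl j * ⁅u ^ binEval t' j, v ^ binEval sl j⁆ * (u ^ binEval tl j)⁻¹) * (u ^ binEval tl j * ((v ^ binEval sl j) * ⁅u ^ binEval t' j, v ^ binEval s' j⁆ * (v ^ binEval sl j)⁻¹) * (u ^ binEval tl j)⁻¹)) * (⁅((u ^ binEval tl j * ⁅u ^ binEval t' j, v ^ binEval sl j⁆ * (u ^ binEval tl j)⁻¹) * (u ^ binEval tl j * ((v ^ binEval sl j) * ⁅u ^ binEval t' j, v ^ binEval s' j⁆ * (v ^ binEval sl j)⁻¹) * (u ^ binEval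 tl j)⁻¹))⁻¹, (⁅u ^ binEval tl j, v ^ binEval sl j⁆)⁻¹⁆)) * ((v ^ binEval sl j) * ⁅u ^ binEval tl j, v ^ binEval s' j⁆ * (v ^ binEval sl j)⁻¹)) M := by
            intro M
            induction M with
            | zero => simp [prodRange]
            | succ M ihM => rw [prodRange_succ, keyid M, ihM, mul_assoc]
          obtain ⟨TsP, hTsP, hTsPe⟩ := hconjD.2 (B₁+B₂+2) (by omega) _ δrep
          have hΦ0 : ⁅u ^ binEval tl 0, v ^ binEval sl 0⁆ ∈ (L (a+b+1)) :=
            mem_lcs_commutator (Subgroup.zpow_mem _ hu _) (Subgroup.zpow_mem _ hv _)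
          have constrep : HasRep (a+b+1) (B₁+B₂+1)
              (fun _ : ℕ => ⁅u ^ binEval tl 0, v ^ binEval sl 0⁆) := by
            apply HasRep.const hΦ0 le_rfl
            have h1 : B₁ ≤ (a:ℤ) := by rw [hlent] at ht; omega
            have h2 : B₂ ≤ (b:ℤ) := by rw [hlens] at hs; omega
            push_cast
            omega
          have sumrep : HasRep (a+b+1) (B₁+B₂+1)
              (fun M => prodRange (fun j => (((u ^ binEval tl j * ⁅u ^ binEval t' j, v ^ binEval sl j⁆ * (u ^ binEval tl j)⁻¹) * (u ^ binEval tl j * ((v ^ binEval sl j) * ⁅u ^ binEval t' j, v ^ binEval s' j⁆ * (v ^ binEval sl j)⁻¹) * (u ^ binEval tl j)⁻¹)) * (⁅((u ^ binEval tl j * ⁅u ^ binEval t' j, v ^ binEval sl j⁆ * (u ^ binEval tl j)⁻¹) * (u ^ binEval tl j * ((v ^ binEval sl j) * ⁅u ^ binEval t' j, v ^ binEval s' j⁆ * (v ^ binEval sl j)⁻¹) * (u ^ binEval tl j)⁻¹))⁻¹, (⁅u ^ binEval tl j, v ^ binEval sl j⁆)⁻¹⁆)) * ((v ^ binEval sl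 j) * ⁅u ^ binEval tl j, v ^ binEval s' j⁆ * (v ^ binEval sl j)⁻¹)) M) :=
            HasRep.mono ⟨TsP, hTsP, hTsPe⟩ le_rfl (by omega)
          have final := constrep.mul sumrep
          apply final.congr
          intro j
          exact (telescope j).symm
      exact main (t.length + s₀l.length) t s₀l B₁ B₂ le_rfl ht hs hB₁ hB₂
    have hbrkc : BrkcStmt G P := by
      intro W₁ B hB f hf v b s B₂ hv hs hB₂ hP'
      have hconjD : ConjStmt G (W₁+b+1) := by
        rcases Nat.eq_or_lt_of_le hP' with heq | hlt
        · exact heq ▸ hconj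
        · exact (IHnext _ hlt).1
      obtain ⟨Ts, hTs, hfe⟩ := hf
      have main : ∀ (Ts : List (Tm G)), (∀ T ∈ Ts, TmOK W₁ B T) →
          HasRep (W₁+b+1) (B + B₂ + 1) (fun j => ⁅evList Ts j, v ^ binEval s j⁆) := by
        intro Ts
        induction Ts with
        | nil =>
          intro _
          refine ⟨[], by simp, fun j => ?_⟩
          show ⁅evList ([] : List (Tm G)) j, v ^ binEval s j⁆ = 1
          show ⁅(1:G), v ^ binEval s j⁆ = 1
          group
        | cons T rest ihrest =>
          intro hTs
          obtain ⟨hTu, hTw, hTc⟩ := hTs T (List.mem_cons_self)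
          have Rrep := ihrest (fun S hS => hTs S (List.mem_cons_of_mem _ hS))
          have Crep := conj_hasRep hconjD (B := B+B₂+1) (by omega) Rrep hTu hTc hB
          have Arep : HasRep (W₁+b+1) (B+B₂+1)
              (fun j => ⁅T.u ^ binEval T.c j, v ^ binEval s j⁆) := by
            have h := hatom T.u v T.w b T.c s B B₂ hTu hv hTc hs hB hB₂ (by omega)
            exact h.mono (by omega) le_rfl
          have comb := Crep.mul Arep
          apply comb.congr
          intro j
          have hTev : T.ev j = T.u ^ binEval T.c j := rfl
          show T.u ^ binEval T.c j * ⁅evList rest j, v ^ binEval s j⁆ *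
              (T.u ^ binEval T.c j)⁻¹ * ⁅T.u ^ binEval T.c j, v ^ binEval s j⁆
            = ⁅evList (T :: rest) j, v ^ binEval s j⁆
          rw [evList_cons, hTev]
          group
      have h := main Ts hTs
      apply h.congr
      intro j
      rw [← hfe j]
    exact ⟨hconj, hsumm, hatom, hbrkc⟩

/-- The kill lemma: ordered products over `range (p^n)` of represented sequences
(at floor `K+1`, family `K`) are trivial, given that layer `K+1` is `p^n`-torsion. -/
lemma kill {N : ℕ} (hN : (L N) = ⊥) {p n K : ℕ} (hp : p.Prime) (hK : 1 ≤ K)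
    (hNp : N ≤ K + p - 1) (htor : ∀ u : G, u ∈ (L (K+1)) → u ^ (p^n) = 1) :
    ∀ (dW W : ℕ), N ≤ W + dW → K + 1 ≤ W → ∀ (k : ℕ) (Ts : List (Tm G)),
      (∀ T ∈ Ts, TmOK W (K:ℤ) T) → Ts.countP (fun T => T.w ≤ W) ≤ k →
      ∀ f : ℕ → G, (∀ j, f j = evList Ts j) → prodRange f (p^n) = 1 := by
  intro dW
  induction dW with
  | zero =>
    intro W hW _ k Ts hTs _ f hf
    have h1 : ∀ j, f j = 1 := by
      intro j
      rw [hf j]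
      exact eq_one_of_deep hN hW (evList_mem hTs j)
    rw [prodRange_congr h1, prodRange_one]
  | succ dW ihdW =>
    intro W hW hKW k
    induction k with
    | zero =>
      intro Ts hTs hcnt f hf
      have hatomW : AtomStmt G (W+1) := (pack hN dW (W+1) (by omega)).2.2.1
      rcases move_front hatomW (by omega) Ts hTs with hall | ⟨T₁, Ts', hT₁, _, _, hCnt⟩
      · have hTs' : ∀ T ∈ Ts, TmOK (W+1) (K:ℤ) T := by
          intro T hT
          obtain ⟨h1, h2, h3⟩ := hTs T hT
          have := hall T hT
          exact ⟨h1, by omega, h3⟩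
        exact ihdW (W+1) (by omega) (by omega) _ Ts hTs' le_rfl f hf
      · exfalso
        have : 0 < (T₁ :: Ts').countP (fun T => T.w ≤ W) := by
          rw [List.countP_cons]
          have : T₁.w ≤ W := le_of_eq hT₁
          simp [this]
        omega
    | succ k ihk =>
      intro Ts hTs hcnt f hf
      have hatomW : AtomStmt G (W+1) := (pack hN dW (W+1) (by omega)).2.2.1
      have hconjW : ConjStmt G W := (pack hN (dW+1) W (by omega)).1
      rcases move_front hatomW (by omega) Ts hTs with hall | ⟨T₁, Ts', hT₁, hOK, hEv, hCnt⟩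
      · have hTs' : ∀ T ∈ Ts, TmOK (W+1) (K:ℤ) T := by
          intro T hT
          obtain ⟨h1, h2, h3⟩ := hTs T hT
          have := hall T hT
          exact ⟨h1, by omega, h3⟩
        exact ihdW (W+1) (by omega) (by omega) _ Ts hTs' le_rfl f hf
      · obtain ⟨hT₁u, hT₁w, hT₁c⟩ := hOK T₁ (List.mem_cons_self)
        have hTs' : ∀ T ∈ Ts', TmOK W (K:ℤ) T := fun S hS => hOK S (List.mem_cons_of_mem _ hS)
        obtain ⟨Ts₂, h2a, h2b, h2c⟩ :=
          hconjW (K:ℤ) (by omega) Ts' hTs' T₁.u T₁.w (sumP T₁.c) ((K:ℤ) - 1) hT₁u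
            (by rw [length_sumP]; push_cast; omega) (by omega)
        have hcnt₂ : Ts₂.countP (fun T => T.w ≤ W) ≤ k := by
          have h1 : (T₁ :: Ts').countP (fun T => T.w ≤ W)
              = Ts'.countP (fun T => T.w ≤ W) + 1 := by
            rw [List.countP_cons]
            have : T₁.w ≤ W := le_of_eq hT₁
            simp [this]
          omega
        have hrec := ihk Ts₂ h2a hcnt₂ (fun j => evList Ts₂ j) (fun j => rfl)
        -- now kill the peeled factor
        have hfactor : T₁.u ^ (binEval (0 :: T₁.c) (p^n)) = 1 := by
          by_cases hc : (T₁.c.length : ℤ) + 1 ≤ (p : ℤ)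
          · have hdvd := dvd_sum_range_binEval (n := n) hp T₁.c (by exact_mod_cast hc)
            rw [sum_range_binEval] at hdvd
            obtain ⟨m, hm⟩ := hdvd
            rw [hm, zpow_mul]
            have : T₁.u ∈ (L (K+1)) := lowerCentralSeries_antitone (by omega) hT₁u
            have h1 : T₁.u ^ ((p^n : ℕ) : ℤ) = 1 := by
              rw [zpow_natCast]
              exact htor _ this
            rw [h1, one_zpow]
          · have hdeep : (N : ℕ) ≤ T₁.w := by omega
            rw [eq_one_of_deep hN hdeep hT₁u, one_zpow]
        have step1 : prodRange f (p^n)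
            = prodRange (fun j => T₁.u ^ binEval T₁.c j * evList Ts' j) (p^n) := by
          apply prodRange_congr
          intro j
          rw [hf j, hEv j, evList_cons]
          rfl
        have step2 := peel_identity T₁.u T₁.c (fun j => evList Ts' j) (p^n)
        have step3 : prodRange (fun j => T₁.u ^ binEval (sumP T₁.c) j * evList Ts' j
              * (T₁.u ^ binEval (sumP T₁.c) j)⁻¹) (p^n)
            = prodRange (fun j => evList Ts₂ j) (p^n) := by
          apply prodRange_congr
          intro j
          exact h2b j
        rw [step1, step2, step3, hrec, hfactor, one_mul]

end Machinery

/-! ### Assembly -/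

section Assembly

variable {G : Type*} [Group G]

local notation "L" n => lowerCentralSeries G n

@[simp] lemma binEval_id_list (j : ℕ) : binEval [0, 1] j = (j:ℤ) := by
  simp [binEval, binAux, Nat.choose_one_right]

@[simp] lemma binEval_oneone_list (j : ℕ) : binEval [1, 1] j = (j:ℤ) + 1 := by
  simp [binEval, binAux, Nat.choose_one_right]
  ring

lemma assembly_identity (x y : G) (m : ℕ) :
    (x * y) ^ m
      = prodRange (fun j => x ^ (j+1) * ⁅x⁻¹, y ^ j⁆ * (x ^ (j+1))⁻¹) m
        * (x ^ m * y ^ m) := by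
  induction m with
  | zero => simp
  | succ m ih =>
    rw [pow_succ (x*y), ih, prodRange_succ, pow_succ x, pow_succ y]
    group

lemma power_split {p n : ℕ} (hp : p.Prime) (hG : (L p) = ⊥)
    {K : ℕ} (hK : 1 ≤ K)
    (htor : ∀ u : G, u ∈ (L (K+1)) → u ^ (p^n) = 1)
    {x : G} (hx : x ∈ (L K)) (y : G) :
    (x * y) ^ (p^n) = x ^ (p^n) * y ^ (p^n) := by
  have hatomK : AtomStmt G (K+1) := (pack hG p (K+1) (by omega)).2.2.1
  have hconjK : ConjStmt G (K+1) := (pack hG p (K+1) (by omega)).1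
  have erep := hatomK x⁻¹ y K 0 [1] [0,1] (K:ℤ) (-1) (inv_mem hx) (Subgroup.mem_top y)
      (by simp) (by simp) (by omega) (by omega) (by omega)
  have erep' : HasRep (K+1) (K:ℤ)
      (fun j => ⁅x⁻¹ ^ binEval [1] j, y ^ binEval [0,1] j⁆) := by
    have h := erep.mono (W' := K+1) (B' := (K:ℤ)) (by omega) (by omega)
    exact h
  have crep := conj_hasRep hconjK (B := (K:ℤ)) (by omega) erep' (v := x) (b := K)
      (s := [1,1]) (B₂ := (K:ℤ)-1) hx (by simp; omega) (by omega)
  obtain ⟨Ts, hTs, hTse⟩ := crep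
  have hkill := kill hG hp hK (by omega) htor p (K+1) (by omega) (by omega)
      (Ts.countP (fun T => T.w ≤ K+1)) Ts hTs le_rfl _ hTse
  have hconv : ∀ j : ℕ,
      (x ^ binEval [1,1] j * ⁅x⁻¹ ^ binEval [1] j, y ^ binEval [0,1] j⁆
        * (x ^ binEval [1,1] j)⁻¹)
      = x ^ (j+1) * ⁅x⁻¹, y ^ j⁆ * (x ^ (j+1))⁻¹ := by
    intro j
    rw [binEval_one_list, binEval_id_list, binEval_oneone_list, zpow_one]
    rw [show ((j:ℤ)+1) = ((j+1 : ℕ) : ℤ) by push_cast; ring, zpow_natCast, zpow_natCast]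
  have hprod : prodRange (fun j => x ^ (j+1) * ⁅x⁻¹, y ^ j⁆ * (x ^ (j+1))⁻¹) (p^n) = 1 := by
    rw [← prodRange_congr hconv]
    exact hkill
  rw [assembly_identity x y (p^n), hprod, one_mul]

lemma torsion_descent {p n : ℕ} (hp : p.Prime) (hG : (L p) = ⊥)
    (hcen : ∀ g : G, g ^ (p^n) ∈ Subgroup.center G) :
    ∀ i, i ≤ p - 1 → ∀ a ∈ (L (p - i)), a ^ (p^n) = 1 := by
  intro i
  induction i with
  | zero =>
    intro _ a ha
    rw [Nat.sub_zero] at ha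
    rw [hG] at ha
    simp only [Subgroup.mem_bot] at ha
    simp [ha]
  | succ i ih =>
    intro hi a ha
    have hp2 := hp.two_le
    have hKsucc : p - (i+1) + 1 = p - i := by omega
    have hK1 : 1 ≤ p - (i+1) := by omega
    set K := p - (i+1) with hKdef
    have htor : ∀ u : G, u ∈ (L (K+1)) → u ^ (p^n) = 1 := by
      intro u hu
      apply ih (by omega)
      rw [← hKsucc]
      exact hu
    obtain ⟨K', hK'⟩ : ∃ K', K = K' + 1 := ⟨K - 1, by omega⟩
    have key : ∀ g ∈ (L K), g ^ (p^n) = 1 := by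
      intro g hg
      rw [hK', lowerCentralSeries_succ] at hg
      induction hg using Subgroup.closure_induction with
      | mem g hgS =>
        obtain ⟨p₁, hp₁, q₁, _, hpq⟩ := hgS
        have hcomm : ⁅p₁, q₁⁆ ∈ (L K) := by
          rw [hK']
          rw [lowerCentralSeries_succ]
          exact Subgroup.subset_closure ⟨p₁, hp₁, q₁, Subgroup.mem_top _, rfl⟩
        have h1 := power_split hp hG hK1 htor hcomm q₁
        have h2 : ⁅p₁, q₁⁆ * q₁ = p₁ * q₁ * p₁⁻¹ := by group
        have h3 : (p₁ * q₁ * p₁⁻¹) ^ (p^n) = p₁ * q₁ ^ (p^n) * p₁⁻¹ := by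
          rw [conj_pow]
        have h4 : p₁ * q₁ ^ (p^n) * p₁⁻¹ = q₁ ^ (p^n) := by
          have hc := (Subgroup.mem_center_iff.mp (hcen q₁)) p₁
          rw [hc]
          group
        rw [h2, h3, h4] at h1
        have h5 : ⁅p₁, q₁⁆ ^ (p^n) = 1 := by
          have := h1.symm
          calc ⁅p₁, q₁⁆ ^ (p^n)
              = ⁅p₁, q₁⁆ ^ (p^n) * q₁ ^ (p^n) * (q₁ ^ (p^n))⁻¹ := by group
            _ = q₁ ^ (p^n) * (q₁ ^ (p^n))⁻¹ := by rw [← h1]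
            _ = 1 := by group
        rw [← hpq]
        exact h5
      | one => exact one_pow _
      | mul g h hgmem hhmem hgeq hheq =>
        have hgK : g ∈ (L K) := by
          rw [hK', lowerCentralSeries_succ]
          exact hgmem
        rw [power_split hp hG hK1 htor hgK h, hgeq, hheq, one_mul]
      | inv g hgmem hgeq =>
        rw [inv_pow, hgeq, inv_one]
    exact key a ha

end Assembly

end HPwork

open HPwork in
/-- Let `p` be a prime and `G` a finite `p`-group of nilpotency class at most `p`
(i.e. `γ_{p+1}(G) = lowerCentralSeries G p = ⊥`).  Then the exponent of the commutator
subgroup `γ₂(G) = [G,G] = lowerCentralSeries G 1` divides the exponent of `G/Z(G)`. -/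
theorem exponent_commutator_dvd_exponent_quotient_center
    {p : ℕ} (hp : p.Prime) {G : Type*} [Group G] [Finite G]
    (hpG : IsPGroup p G) (hG : Subgroup.lowerCentralSeries (⊤ : Subgroup G) p = ⊥) :
    Monoid.exponent (Subgroup.lowerCentralSeries (⊤ : Subgroup G) 1) ∣
      Monoid.exponent (G ⧸ Subgroup.center G) := by
  classical
  haveI := Fact.mk hp
  set q := Monoid.exponent (G ⧸ Subgroup.center G) with hqdef
  have hqG : IsPGroup p (G ⧸ Subgroup.center G) := hpG.to_quotient _
  obtain ⟨m, hm⟩ := IsPGroup.iff_card.mp hqG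
  haveI : Fintype (G ⧸ Subgroup.center G) := Fintype.ofFinite _
  have hdvd : q ∣ p ^ m := by
    rw [← hm, Nat.card_eq_fintype_card]
    exact Group.exponent_dvd_card
  obtain ⟨n, _, hq⟩ := (Nat.dvd_prime_pow hp).mp hdvd
  have hcen : ∀ g : G, g ^ (p^n) ∈ Subgroup.center G := by
    intro g
    rw [← QuotientGroup.eq_one_iff]
    have h1 : ((g ^ (p^n) : G) : G ⧸ Subgroup.center G)
        = ((g : G ⧸ Subgroup.center G)) ^ (p^n) := by
      push_cast
      rfl
    rw [h1, ← hq]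
    exact Monoid.pow_exponent_eq_one _
  have hT1 := torsion_descent hp hG hcen (p - 1) le_rfl
  have hp1 : p - (p - 1) = 1 := by have := hp.two_le; omega
  rw [hp1] at hT1
  apply Monoid.exponent_dvd_of_forall_pow_eq_one
  intro g
  have hg : (g : G) ^ q = 1 := by
    rw [hq]
    exact hT1 g g.2
  ext
  push_cast
  rw [hg]
end
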